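/- The ribbon multiplication rule in Sym: for compositions K = (k₁,...,k_r) of m and K' = (k'₁,...,k'_s) of m', one has R_K · R_{K'} = R_{(k₁,...,k_r,k'₁,...,k'_s)} + R_{(k₁,...,k_{r-1}, k_r + k'₁, k'₂,...,k'_s)}, equivalently, in terms of descent sets, Des(K·K') = Des(K) ∪ {m} ∪ (Des(K')+m) and Des(K▷K') = Des(K) ∪ (Des(K')+m). -/

import Mathlib

/-- Noncommutative symmetric functions: free algebra on the complete functions. -/
abbrev NCSym : Type := FreeAlgebra ℚ ℕ

/-- The complete noncommutative symmetric function `Sₙ`. -/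
def Scomp (n : ℕ) : NCSym := FreeAlgebra.ι ℚ n

/-- `S^J = S_{j₁} ⋯ S_{j_r}` for a composition `J`. -/
def Sprod {n : ℕ} (c : Composition n) : NCSym := (c.blocks.map Scomp).prod

/-- The descent set of a composition of `n`. -/
def Composition.des {n : ℕ} (c : Composition n) : Finset ℕ :=
  (Finset.range (c.length - 1)).image (fun i => c.sizeUpTo (i + 1))

/-- The ribbon basis `R_I = Σ_{Des J ⊆ Des I} (-1)^{l(I)-l(J)} S^J`. -/
def Rib {n : ℕ} (c : Composition n) : NCSym :=
  ∑ d ∈ Finset.univ.filter (fun d : Composition n => d.des ⊆ c.des),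
    ((-1 : ℚ) ^ (c.length + d.length)) • Sprod d

/-!
Expand both sides in the basis `S^J`. A composition `e ⊨ m + m'` with `m ∈ Des e` is uniquely a
concatenation `d · d'` with `d ⊨ m`, `d' ⊨ m'`, and `Des (d · d') ⊆ Des (K · K')` exactly when
`Des d ⊆ Des K` and `Des d' ⊆ Des K'`; since `S^{d · d'} = S^d S^{d'}`, the product `R_K R_{K'}` is
the part of the expansion of `R_{K·K'}` over the `e` with `m ∈ Des e`. The remaining part, over the
`e` with `m ∉ Des e`, is `-R_{K▷K'}`, because `Des (K▷K') = Des (K·K') \ {m}` and `K▷K'` has one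
part fewer than `K·K'`.
-/

open Finset

namespace Composition

variable {m n : ℕ}

@[simp]
lemma length_append (c : Composition m) (c' : Composition n) :
    (c.append c').length = c.length + c'.length := by
  simp [length]

lemma sizeUpTo_append (c : Composition m) (c' : Composition n) (i : ℕ) :
    (c.append c').sizeUpTo i = c.sizeUpTo i + c'.sizeUpTo (i - c.length) := by
  simp only [sizeUpTo, append_blocks, List.take_append, List.sum_append]

lemma sizeUpTo_lt_sizeUpTo (c : Composition n) {i j : ℕ} (hij : i < j) (hj : j ≤ c.length) :
    c.sizeUpTo i < c.sizeUpTo j :=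
  c.boundary.strictMono (show (⟨i, by omega⟩ : Fin (c.length + 1)) < ⟨j, by omega⟩ from hij)

lemma eq_of_sizeUpTo_eq (c : Composition n) {i j : ℕ} (hi : i ≤ c.length) (hj : j ≤ c.length)
    (h : c.sizeUpTo i = c.sizeUpTo j) : i = j := by
  rcases lt_trichotomy i j with hij | rfl | hij
  · exact absurd h (c.sizeUpTo_lt_sizeUpTo hij hj).ne
  · rfl
  · exact absurd h (c.sizeUpTo_lt_sizeUpTo hij hi).ne'

lemma mem_des_iff (c : Composition n) {x : ℕ} :
    x ∈ c.des ↔ ∃ i, 0 < i ∧ i < c.length ∧ c.sizeUpTo i = x := by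
  simp only [des, mem_image, mem_range]
  constructor
  · rintro ⟨i, hi, rfl⟩
    exact ⟨i + 1, i.succ_pos, by omega, rfl⟩
  · rintro ⟨i, hi, hil, rfl⟩
    exact ⟨i - 1, by omega, by rw [Nat.sub_add_cancel hi]⟩

lemma pos_of_mem_des (c : Composition n) {x : ℕ} (hx : x ∈ c.des) : 0 < x := by
  obtain ⟨i, hi, hil, rfl⟩ := c.mem_des_iff.1 hx
  simpa using c.sizeUpTo_lt_sizeUpTo hi hil.le

lemma lt_of_mem_des (c : Composition n) {x : ℕ} (hx : x ∈ c.des) : x < n := by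
  obtain ⟨i, -, hil, rfl⟩ := c.mem_des_iff.1 hx
  simpa using c.sizeUpTo_lt_sizeUpTo hil le_rfl

lemma card_des (c : Composition n) : #c.des = c.length - 1 := by
  rw [des, card_image_of_injOn, card_range]
  intro i hi j hj h
  simp only [coe_range, Set.mem_Iio] at hi hj
  simpa using c.eq_of_sizeUpTo_eq (by omega) (by omega) h

lemma length_eq_card_des_add_one (hn : 0 < n) (c : Composition n) :
    c.length = #c.des + 1 := by
  have := c.length_pos_of_pos hn
  rw [card_des]
  omega

lemma des_append (hm : 0 < m) (hn : 0 < n) (c : Composition m) (c' : Composition n) :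
    (c.append c').des = c.des ∪ {m} ∪ c'.des.image (fun d => d + m) := by
  have hc := c.length_pos_of_pos hm
  have hc' := c'.length_pos_of_pos hn
  ext x
  simp only [mem_union, mem_singleton, mem_image, mem_des_iff, length_append, sizeUpTo_append]
  constructor
  · rintro ⟨i, hi, hil, rfl⟩
    rcases lt_trichotomy i c.length with h | rfl | h
    · exact .inl (.inl ⟨i, hi, h, by simp [Nat.sub_eq_zero_of_le h.le]⟩)
    · exact .inl (.inr (by simp))
    · refine .inr ⟨_, ⟨i - c.length, by omega, by omega, rfl⟩, ?_⟩
      rw [c.sizeUpTo_ofLength_le i h.le, add_comm]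
  · rintro ((⟨i, hi, hil, rfl⟩ | rfl) | ⟨_, ⟨j, hj, hjl, rfl⟩, rfl⟩)
    · exact ⟨i, hi, by omega, by simp [Nat.sub_eq_zero_of_le hil.le]⟩
    · exact ⟨c.length, hc, by omega, by simp⟩
    · refine ⟨c.length + j, by omega, by omega, ?_⟩
      rw [c.sizeUpTo_ofLength_le _ (by omega), Nat.add_sub_cancel_left, add_comm]

lemma des_append_subset_des_append_iff (hm : 0 < m) (hn : 0 < n)
    {c d : Composition m} {c' d' : Composition n} :
    (d.append d').des ⊆ (c.append c').des ↔ d.des ⊆ c.des ∧ d'.des ⊆ c'.des := by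
  simp only [des_append hm hn, subset_iff, mem_union, mem_singleton, mem_image]
  constructor
  · intro h
    refine ⟨fun x hx => ?_, fun x hx => ?_⟩
    · have := d.lt_of_mem_des hx
      rcases h (.inl (.inl hx)) with (hx' | rfl) | ⟨y, -, rfl⟩
      exacts [hx', by omega, by omega]
    · have := d'.pos_of_mem_des hx
      rcases h (.inr ⟨x, hx, rfl⟩) with (hx' | hx') | ⟨y, hy, hyx⟩
      · exact absurd (c.lt_of_mem_des hx') (by omega)
      · omega
      · rwa [← add_right_cancel hyx]
  · rintro ⟨h, h'⟩ x ((hx | rfl) | ⟨y, hy, rfl⟩)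
    exacts [.inl (.inl (h hx)), .inl (.inr rfl), .inr ⟨y, h' hy, rfl⟩]

lemma sizeUpTo_append_length (c : Composition m) (c' : Composition n) :
    (c.append c').sizeUpTo c.length = m := by
  simp [sizeUpTo_append]

lemma append_inj {c d : Composition m} {c' d' : Composition n}
    (h : c.append c' = d.append d') : c = d ∧ c' = d' := by
  have hlen : c.length = d.length := by
    refine (c.append c').eq_of_sizeUpTo_eq (by simp) ?_ ?_
    · rw [h, length_append]
      omega
    · rw [sizeUpTo_append_length, h, sizeUpTo_append_length]
  obtain ⟨hb, hb'⟩ := List.append_inj (congrArg blocks h) hlen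
  exact ⟨Composition.ext hb, Composition.ext hb'⟩

lemma exists_append_eq_of_mem_des {e : Composition (m + n)} (he : m ∈ e.des) :
    ∃ (c : Composition m) (c' : Composition n), c.append c' = e := by
  obtain ⟨i, -, -, hi⟩ := e.mem_des_iff.1 he
  have hsum := e.blocks_sum
  rw [← List.take_append_drop i e.blocks, List.sum_append] at hsum
  exact ⟨⟨e.blocks.take i, fun hx => e.blocks_pos (List.mem_of_mem_take hx), hi⟩,
    ⟨e.blocks.drop i, fun hx => e.blocks_pos (List.mem_of_mem_drop hx),
      by simp only [sizeUpTo] at hi; omega⟩,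
    Composition.ext (List.take_append_drop i e.blocks)⟩

end Composition

open Composition

lemma Sprod_append {m n : ℕ} (c : Composition m) (c' : Composition n) :
    Sprod (c.append c') = Sprod c * Sprod c' := by
  simp [Sprod]

lemma Rib_add_Rib_of_des_eq_insert {n k : ℕ} {L L' : Composition n} (hk : k ∉ L'.des)
    (h : L.des = insert k L'.des) :
    Rib L + Rib L' = ∑ e ∈ univ.filter (fun e : Composition n => e.des ⊆ L.des ∧ k ∈ e.des),
      (-1 : ℚ) ^ (L.length + e.length) • Sprod e := by
  have hn : 0 < n := by
    have := L.lt_of_mem_des (h ▸ mem_insert_self k L'.des)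
    omega
  have hlen : L.length = L'.length + 1 := by
    rw [length_eq_card_des_add_one hn, length_eq_card_des_add_one hn, h, card_insert_of_notMem hk]
  have hL' : ∑ e ∈ univ.filter (fun e : Composition n => e.des ⊆ L.des ∧ k ∉ e.des),
      (-1 : ℚ) ^ (L.length + e.length) • Sprod e = -Rib L' := by
    rw [Rib, ← sum_neg_distrib]
    refine sum_congr (filter_congr fun e _ => ?_) fun e _ => ?_
    · rw [h]
      exact ⟨fun ⟨hsub, hke⟩ => (subset_insert_iff_of_notMem hke).1 hsub,
        fun hsub => ⟨hsub.trans (subset_insert _ _), fun hke => hk (hsub hke)⟩⟩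
    · rw [hlen, add_right_comm, pow_succ, mul_neg_one, neg_smul]
  rw [Rib, ← sum_filter_add_sum_filter_not _ (fun e : Composition n => k ∈ e.des),
    filter_filter, filter_filter, hL', neg_add_cancel_right]

lemma Rib_mul_Rib {m n : ℕ} (hm : 0 < m) (hn : 0 < n) (K : Composition m) (K' : Composition n) :
    Rib K * Rib K' =
      ∑ e ∈ univ.filter (fun e : Composition (m + n) => e.des ⊆ (K.append K').des ∧ m ∈ e.des),
        (-1 : ℚ) ^ ((K.append K').length + e.length) • Sprod e := by
  rw [Rib, Rib, sum_mul_sum, ← sum_product']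
  refine sum_bij (fun p _ => p.1.append p.2) ?_ ?_ ?_ ?_
  · rintro ⟨d, d'⟩ hp
    simp only [mem_product, mem_filter, mem_univ, true_and] at hp ⊢
    refine ⟨(des_append_subset_des_append_iff hm hn).2 hp, ?_⟩
    simp [des_append hm hn]
  · rintro ⟨d, d'⟩ - ⟨e, e'⟩ - h
    obtain ⟨rfl, rfl⟩ := append_inj h
    rfl
  · intro e he
    simp only [mem_filter, mem_univ, true_and] at he
    obtain ⟨d, d', rfl⟩ := exists_append_eq_of_mem_des he.2
    refine ⟨(d, d'), ?_, rfl⟩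
    simpa using (des_append_subset_des_append_iff hm hn).1 he.1
  · rintro ⟨d, d'⟩ -
    rw [smul_mul_smul_comm, ← pow_add, Sprod_append, length_append, length_append,
      add_add_add_comm]

/-- The ribbon multiplication rule `R_K · R_{K'} = R_{K·K'} + R_{K▷K'}`,
where, in terms of descent sets, `Des(K·K') = Des K ∪ {m} ∪ (Des K' + m)` and
`Des(K▷K') = Des K ∪ (Des K' + m)` for `K ⊨ m`, `K' ⊨ m'` (both nonempty). -/
theorem stmt11 (m m' : ℕ) (hm : 0 < m) (hm' : 0 < m')
    (K : Composition m) (K' : Composition m')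
    (L L' : Composition (m + m'))
    (hL : L.des = K.des ∪ {m} ∪ K'.des.image (fun d => d + m))
    (hL' : L'.des = K.des ∪ K'.des.image (fun d => d + m)) :
    Rib K * Rib K' = Rib L + Rib L' := by
  have hLdes : L.des = (K.append K').des := by rw [hL, des_append hm hm']
  have hLlen : L.length = (K.append K').length := by
    rw [length_eq_card_des_add_one (by omega), length_eq_card_des_add_one (by omega), hLdes]
  have hmL' : m ∉ L'.des := by
    rw [hL', mem_union, mem_image, not_or, not_exists]
    exact ⟨fun h => (K.lt_of_mem_des h).false,
      fun y ⟨hy, hym⟩ => (K'.pos_of_mem_des hy).ne' (by omega)⟩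
  have hLins : L.des = insert m L'.des := by
    rw [hL, hL', insert_eq, union_comm K.des, union_assoc]
  rw [Rib_add_Rib_of_des_eq_insert hmL' hLins, Rib_mul_Rib hm hm', hLdes, hLlen]
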